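/- There exist complex roots β₁, β₂, β₃, β₄ of P₅(T) = T⁸ − T⁷ + 2T⁶ − 4T⁵ + 16T⁴ − 20T³ + 50T² − 125T + 625, pairwise distinct and each with strictly positive imaginary part, satisfying the nontrivial multiplicative relation β₁β₄ = β₂β₃. -/

import Mathlib

open Polynomial

/-- The Weil polynomial of the Jacobian of `y² = x⁹ + x⁶ + 2x⁵ + x` over `𝔽₅`. -/
noncomputable def P5 : Polynomial ℂ :=
  X ^ 8 - X ^ 7 + 2 * X ^ 6 - 4 * X ^ 5 + 16 * X ^ 4 - 20 * X ^ 3 + 50 * X ^ 2 - 125 * X + 625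

/-!
If `β² - γβ + 5 = 0` then `P5 β = β⁴ Q5 γ`, so every real root `γ` of `Q5` with `γ² < 20` gives the
root `β = (γ + i√(20 - γ²))/2` of `P5` in the upper half-plane, with `|β|² = 5`.

Let `τ ≈ -9.8727` be a root of `τ³ + τ² - 80τ + 75` and `5r² = 4τ² + 44τ + 45`. Over `ℚ(τ, r)` the
quartic `Q5` splits into two quadratic factors exchanged by `r ↦ -r`. If `γ, γ'` are the roots of
one factor and `β, β'` the corresponding roots of `P5`, then `Re (ββ') = τ/2` for both factors,
`|ββ'| = 5`, and `Im (ββ') > 0` because `γ + γ' > 0`; so the two products coincide. The number `τ`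
is `2 Re (β₁β₄)`; it and the coefficients `γ₁ + γ₄`, `γ₁γ₄` of the factor were recognised
numerically as algebraic numbers.
-/

open Complex

def Q5 (x : ℝ) : ℝ := x ^ 4 - x ^ 3 - 18 * x ^ 2 + 11 * x + 46

theorem P5_eval_eq_of_sq_sub_mul_add_five {β : ℂ} {γ : ℝ} (h : β ^ 2 - γ * β + 5 = 0) :
    P5.eval β = β ^ 4 * Q5 γ := by
  have hβ : β ≠ 0 := by rintro rfl; norm_num at h
  have hγ : (γ : ℂ) = β + 5 / β := by field_simp; linear_combination -h
  simp only [P5, Q5, eval_add, eval_sub, eval_mul, eval_pow, eval_X, eval_ofNat]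
  push_cast
  rw [hγ]
  field_simp
  ring

noncomputable def upperRoot (γ : ℝ) : ℂ := ⟨γ / 2, √(20 - γ ^ 2) / 2⟩

section upperRoot

variable {γ : ℝ}

theorem upperRoot_sq_sub_mul_add_five (h : γ ^ 2 ≤ 20) :
    upperRoot γ ^ 2 - γ * upperRoot γ + 5 = 0 := by
  have hs := Real.sq_sqrt (sub_nonneg.mpr h)
  simp only [upperRoot]
  generalize √(20 - γ ^ 2) = s at hs
  apply Complex.ext
  · simp only [sq, sub_re, add_re, mul_re, ofReal_re, ofReal_im, re_ofNat, zero_re]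
    linear_combination -hs / 4
  · simp only [sq, sub_im, add_im, mul_im, ofReal_re, ofReal_im, im_ofNat, zero_im]
    ring

theorem normSq_upperRoot (h : γ ^ 2 ≤ 20) : normSq (upperRoot γ) = 5 := by
  have hs := Real.sq_sqrt (sub_nonneg.mpr h)
  simp only [upperRoot, normSq_mk]
  nlinarith

theorem upperRoot_im_pos (h : γ ^ 2 < 20) : 0 < (upperRoot γ).im := by
  simpa [upperRoot] using h

theorem P5_eval_upperRoot (h : γ ^ 2 ≤ 20) (hQ : Q5 γ = 0) : P5.eval (upperRoot γ) = 0 := by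
  rw [P5_eval_eq_of_sq_sub_mul_add_five (upperRoot_sq_sub_mul_add_five h), hQ]
  simp

theorem re_upperRoot_mul {γ' y : ℝ} (hγ : γ ^ 2 ≤ 20) (hy : 0 ≤ y)
    (hy2 : y ^ 2 = (20 - γ ^ 2) * (20 - γ' ^ 2)) :
    (upperRoot γ * upperRoot γ').re = (γ * γ' - y) / 4 := by
  have : √(20 - γ ^ 2) * √(20 - γ' ^ 2) = y := by
    rw [← Real.sqrt_mul (sub_nonneg.mpr hγ), ← hy2, Real.sqrt_sq hy]
  simp only [upperRoot, mul_re]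
  linear_combination -this / 4

end upperRoot

namespace Complex

theorem im_mul_pos_of_re_add_pos {z w : ℂ} (hz : 0 < z.im) (hw : 0 < w.im)
    (hn : normSq z = normSq w) (hre : 0 < z.re + w.re) : 0 < (z * w).im := by
  rw [normSq_apply, normSq_apply] at hn
  have key : 2 * (z.re + w.re) * (z * w).im
      = (z.re + w.re) ^ 2 * (z.im + w.im) + (w.im - z.im) ^ 2 * (z.im + w.im) := by
    rw [mul_im]; linear_combination (w.im - z.im) * hn
  have : 0 < 2 * (z.re + w.re) * (z * w).im := by rw [key]; positivity
  exact pos_of_mul_pos_right this (by positivity)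

theorem eq_of_re_eq_of_normSq_eq {z w : ℂ} (hre : z.re = w.re) (hn : normSq z = normSq w)
    (hz : 0 < z.im) (hw : 0 < w.im) : z = w := by
  rw [normSq_apply, normSq_apply, hre] at hn
  refine Complex.ext hre ?_
  nlinarith

end Complex

theorem ne_and_ne_of_mul_eq_mul_of_add_ne {R : Type*} [CommRing R] [IsDomain R] {a b c d : R}
    (h : a * d = b * c) (ha : a ≠ 0) (hs : a + d ≠ b + c) : a ≠ b ∧ a ≠ c := by
  constructor
  · rintro rfl
    exact hs (by rw [mul_left_cancel₀ ha h])
  · rintro rfl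
    exact hs (by rw [mul_left_cancel₀ ha (h.trans (mul_comm _ _)), add_comm])

theorem exists_lt_add_eq_mul_eq {p a : ℝ} (ha : a < 0) :
    ∃ γ γ' : ℝ, γ < γ' ∧ γ + γ' = p ∧ γ * γ' = a := by
  have hD : 0 < p ^ 2 - 4 * a := by nlinarith
  have hs := Real.sq_sqrt hD.le
  refine ⟨(p - √(p ^ 2 - 4 * a)) / 2, (p + √(p ^ 2 - 4 * a)) / 2, ?_, by ring, ?_⟩
  · linarith [Real.sqrt_pos.mpr hD]
  · linear_combination -hs / 4

theorem exists_upperRoot_pair {p a y : ℝ} (hQ : ∀ x, x ^ 2 - p * x + a = 0 → Q5 x = 0)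
    (hp : 0 < p) (ha : a < 0) (hy : 0 < y) (hpa : p ^ 2 - 2 * a < 40)
    (hy2 : y ^ 2 = 400 - 20 * (p ^ 2 - 2 * a) + a ^ 2) :
    ∃ β β' : ℂ, P5.eval β = 0 ∧ P5.eval β' = 0 ∧ 0 < β.im ∧ 0 < β'.im ∧ β.re < β'.re ∧
      (β + β').re = p / 2 ∧ (β * β').re = (a - y) / 4 ∧ 0 < (β * β').im ∧
      normSq (β * β') = 25 := by
  obtain ⟨γ, γ', hlt, rfl, rfl⟩ := exists_lt_add_eq_mul_eq (p := p) ha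
  have hQγ : Q5 γ = 0 := hQ γ (by ring)
  have hQγ' : Q5 γ' = 0 := hQ γ' (by ring)
  have hy2' : y ^ 2 = (20 - γ ^ 2) * (20 - γ' ^ 2) := by rw [hy2]; ring
  have hγ : γ ^ 2 < 20 ∧ γ' ^ 2 < 20 := by
    have hprod : 0 < (20 - γ ^ 2) * (20 - γ' ^ 2) := hy2' ▸ by positivity
    have hsum : 0 < (20 - γ ^ 2) + (20 - γ' ^ 2) := by nlinarith
    rcases (mul_pos_iff.mp hprod) with h | h
    · exact ⟨by linarith [h.1], by linarith [h.2]⟩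
    · linarith [h.1, h.2]
  have hn : normSq (upperRoot γ) = normSq (upperRoot γ') := by
    rw [normSq_upperRoot hγ.1.le, normSq_upperRoot hγ.2.le]
  refine ⟨upperRoot γ, upperRoot γ', P5_eval_upperRoot hγ.1.le hQγ,
    P5_eval_upperRoot hγ.2.le hQγ', upperRoot_im_pos hγ.1, upperRoot_im_pos hγ.2,
    show γ / 2 < γ' / 2 by linarith, show γ / 2 + γ' / 2 = (γ + γ') / 2 by ring,
    re_upperRoot_mul hγ.1.le hy.le hy2',
    Complex.im_mul_pos_of_re_add_pos (upperRoot_im_pos hγ.1) (upperRoot_im_pos hγ.2) hn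
      (show 0 < γ / 2 + γ' / 2 by linarith), ?_⟩
  rw [normSq_mul, normSq_upperRoot hγ.1.le, normSq_upperRoot hγ.2.le]
  norm_num

noncomputable def traceProd (τ r : ℝ) : ℝ := (τ ^ 2 + 11 * τ - 80 - r * (τ ^ 2 - 9 * τ + 10)) / 10

section Splitting

variable {τ r : ℝ}

theorem Q5_eq_zero_of_quadratic (hτ : τ ^ 3 + τ ^ 2 - 80 * τ + 75 = 0)
    (hr : 5 * r ^ 2 = 4 * τ ^ 2 + 44 * τ + 45) {x : ℝ}
    (hx : x ^ 2 - (1 - r) / 2 * x + traceProd τ r = 0) :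
    Q5 x = 0 := by
  have hsplit : Q5 x = (x ^ 2 - (1 - r) / 2 * x + traceProd τ r) *
      (x ^ 2 - (1 + r) / 2 * x + traceProd τ (-r)) := by
    unfold Q5 traceProd
    linear_combination
      (-3/25 - 2/25 * x + 1/125 * τ - 2/25 * τ * x - 8/125 * τ ^ 2 + 1/125 * τ ^ 3) * hτ +
      (1/5 - 1/5 * x + 1/20 * x ^ 2 - 9/25 * τ + 9/50 * τ * x + 101/500 * τ ^ 2
        - 1/50 * τ ^ 2 * x - 9/250 * τ ^ 3 + 1/500 * τ ^ 4) * hr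
  rw [hsplit, hx, zero_mul]

theorem sq_traceProd_sub_two_mul (hτ : τ ^ 3 + τ ^ 2 - 80 * τ + 75 = 0)
    (hr : 5 * r ^ 2 = 4 * τ ^ 2 + 44 * τ + 45) :
    (traceProd τ r - 2 * τ) ^ 2
      = 400 - 20 * (((1 - r) / 2) ^ 2 - 2 * traceProd τ r) + traceProd τ r ^ 2 := by
  unfold traceProd
  linear_combination (-2/5 + 2/5 * r) * hτ + hr

theorem exists_root_pair (hτ : τ ^ 3 + τ ^ 2 - 80 * τ + 75 = 0)
    (hr : 5 * r ^ 2 = 4 * τ ^ 2 + 44 * τ + 45)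
    (hτl : -9.88 ≤ τ) (hτu : τ ≤ -9.87) :
    ∃ β β' : ℂ, P5.eval β = 0 ∧ P5.eval β' = 0 ∧ 0 < β.im ∧ 0 < β'.im ∧ β.re < β'.re ∧
      (β + β').re = (1 - r) / 4 ∧ (β * β').re = τ / 2 ∧ 0 < (β * β').im ∧
      normSq (β * β') = 25 := by
  have hrl : -2 / 5 < r := by nlinarith
  have hru : r < 2 / 5 := by nlinarith
  have ha : traceProd τ r < 0 := by unfold traceProd; nlinarith
  have hy : 0 < traceProd τ r - 2 * τ := by unfold traceProd; nlinarith
  have hpa : ((1 - r) / 2) ^ 2 - 2 * traceProd τ r < 40 := by unfold traceProd; nlinarith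
  obtain ⟨β, β', h, h', hi, hi', hlt, hsum, hre, him, hn⟩ :=
    exists_upperRoot_pair (fun _ ↦ Q5_eq_zero_of_quadratic hτ hr) (by linarith) ha hy hpa
      (sq_traceProd_sub_two_mul hτ hr)
  exact ⟨β, β', h, h', hi, hi', hlt, by rw [hsum]; ring, by rw [hre]; ring, him, hn⟩

end Splitting

theorem exists_cubic_root :
    ∃ τ : ℝ, τ ^ 3 + τ ^ 2 - 80 * τ + 75 = 0 ∧ -9.88 ≤ τ ∧ τ ≤ -9.87 := by
  have hcont : ContinuousOn (fun τ : ℝ ↦ τ ^ 3 + τ ^ 2 - 80 * τ + 75)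
      (Set.Icc (-9.88) (-9.87)) := by
    fun_prop
  obtain ⟨τ, ⟨hl, hu⟩, hτ⟩ :=
    intermediate_value_Icc (by norm_num) hcont (show (0 : ℝ) ∈ Set.Icc _ _ by norm_num)
  exact ⟨τ, hτ, hl, hu⟩

theorem P5_nontrivial_relation :
    ∃ β₁ β₂ β₃ β₄ : ℂ,
      P5.eval β₁ = 0 ∧ P5.eval β₂ = 0 ∧ P5.eval β₃ = 0 ∧ P5.eval β₄ = 0 ∧
      β₁ ≠ β₂ ∧ β₁ ≠ β₃ ∧ β₁ ≠ β₄ ∧ β₂ ≠ β₃ ∧ β₂ ≠ β₄ ∧ β₃ ≠ β₄ ∧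
      0 < β₁.im ∧ 0 < β₂.im ∧ 0 < β₃.im ∧ 0 < β₄.im ∧
      β₁ * β₄ = β₂ * β₃ := by
  obtain ⟨τ, hτ, hτl, hτu⟩ := exists_cubic_root
  have hd : 0 < (4 * τ ^ 2 + 44 * τ + 45) / 5 := by nlinarith
  set r := √((4 * τ ^ 2 + 44 * τ + 45) / 5)
  have hr : 5 * r ^ 2 = 4 * τ ^ 2 + 44 * τ + 45 := by rw [Real.sq_sqrt hd.le]; ring
  have hr0 : 0 < r := Real.sqrt_pos.mpr hd
  obtain ⟨β₁, β₄, h₁, h₄, hi₁, hi₄, hlt₁₄, hs₁₄, hre₁₄, him₁₄, hn₁₄⟩ :=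
    exists_root_pair hτ hr hτl hτu
  obtain ⟨β₂, β₃, h₂, h₃, hi₂, hi₃, hlt₂₃, hs₂₃, hre₂₃, him₂₃, hn₂₃⟩ :=
    exists_root_pair (r := -r) hτ (by linear_combination hr) hτl hτu
  have hrel : β₁ * β₄ = β₂ * β₃ :=
    Complex.eq_of_re_eq_of_normSq_eq (hre₁₄.trans hre₂₃.symm) (hn₁₄.trans hn₂₃.symm) him₁₄ him₂₃
  have hsum : β₁ + β₄ ≠ β₂ + β₃ := fun h ↦ by
    have := congrArg re h
    linarith
  have hne : ∀ β : ℂ, 0 < β.im → β ≠ 0 := fun β hi h ↦ by simp [h] at hi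
  obtain ⟨h₁₂, h₁₃⟩ := ne_and_ne_of_mul_eq_mul_of_add_ne hrel (hne β₁ hi₁) hsum
  obtain ⟨h₄₂, h₄₃⟩ := ne_and_ne_of_mul_eq_mul_of_add_ne ((mul_comm _ _).trans hrel) (hne β₄ hi₄)
    ((add_comm _ _).trans_ne hsum)
  exact ⟨β₁, β₂, β₃, β₄, h₁, h₂, h₃, h₄, h₁₂, h₁₃, fun h ↦ hlt₁₄.ne (congrArg re h),
    fun h ↦ hlt₂₃.ne (congrArg re h), h₄₂.symm, h₄₃.symm, hi₁, hi₂, hi₃, hi₄, hrel⟩
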